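/- Let m ≥ 1 be an integer, let A be an integral domain that is a ℚ-algebra, let ω ∈ A be a primitive m-th root of unity, and let (E, H, P) be a symmetric triple over A. Define Ẽ(t) = ∏_{j=0}^{m−1} E(ω^j t), H̃(t) = ∏_{j=0}^{m−1} H(ω^j t), and P̃(t) = Σ_{j=0}^{m−1} ω^j·P(ω^j t), where g(ω^j t) denotes the series obtained from g by rescaling t ↦ ω^j t. Then (Ẽ, H̃, P̃) is a symmetric triple over A; its coefficients ẽ_k = [t^k]Ẽ, h̃_k = [t^k]H̃ and p̃_k = [t^{k−1}]P̃ all vanish whenever m does not divide k; and p̃_k = m·p_k whenever m divides k (k ≥ 1), where p_k = [t^{k−1}]P. -/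

import Mathlib

/-!
Rescaling commutes with `d/dX` up to the factor `ω^j`, so the logarithmic derivative of
`∏_j f(ω^j t)` is `Σ_j ω^j (f'/f)(ω^j t)`; this carries the two differential equations over.
The products are invariant under `t ↦ ω t`, which kills their `t^k`-coefficient whenever
`ω^k ≠ 1`, and the `t^(k-1)`-coefficient of `P̃` is `p_k` times the geometric sum `Σ_j ω^(jk)`,
which is `m` or `0` according as `m` divides `k` or not.
-/

open PowerSeries Finset

/-- A symmetric triple: `E` and `H` have constant coefficient `1`,
`E′(t) = E(t)·P(−t)` and `H′(t) = H(t)·P(t)`. -/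
def IsSymmetricTriple {A : Type*} [CommRing A] (E H P : PowerSeries A) : Prop :=
  PowerSeries.constantCoeff E = 1 ∧ PowerSeries.constantCoeff H = 1 ∧
    d⁄dX A E = E * PowerSeries.rescale (-1) P ∧ d⁄dX A H = H * P

theorem Derivation.map_prod_of_eq_mul {R S ι : Type*} [CommSemiring R] [CommSemiring S]
    [Algebra R S] (D : Derivation R S S) (s : Finset ι) {f q : ι → S}
    (h : ∀ i ∈ s, D (f i) = f i * q i) :
    D (∏ i ∈ s, f i) = (∏ i ∈ s, f i) * ∑ i ∈ s, q i := by
  classical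
  induction s using Finset.induction_on with
  | empty => simp
  | insert a s ha ih =>
    rw [prod_insert ha, sum_insert ha, D.leibniz, smul_eq_mul, smul_eq_mul,
      ih fun i hi => h i (mem_insert_of_mem hi), h a (mem_insert_self a s)]
    ring

namespace PowerSeries

variable {A : Type*}

section CommSemiring

variable [CommSemiring A]

theorem constantCoeff_rescale (a : A) (f : A⟦X⟧) :
    constantCoeff (rescale a f) = constantCoeff f := by
  rw [← coeff_zero_eq_constantCoeff_apply, ← coeff_zero_eq_constantCoeff_apply, coeff_rescale,
    pow_zero, one_mul]

theorem rescale_smul (a c : A) (f : A⟦X⟧) : rescale a (c • f) = c • rescale a f := by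
  ext n
  simp only [coeff_rescale, coeff_smul, smul_eq_mul]
  ring

theorem derivative_rescale (a : A) (f : A⟦X⟧) :
    d⁄dX A (rescale a f) = a • rescale a (d⁄dX A f) := by
  ext n
  simp only [coeff_derivative, coeff_rescale, coeff_smul, smul_eq_mul]
  ring

theorem derivative_prod_rescale {ι : Type*} (s : Finset ι) (c : ι → A) {f Q : A⟦X⟧}
    (hf : d⁄dX A f = f * Q) :
    d⁄dX A (∏ i ∈ s, rescale (c i) f) =
      (∏ i ∈ s, rescale (c i) f) * ∑ i ∈ s, c i • rescale (c i) Q :=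
  (d⁄dX A).map_prod_of_eq_mul s fun i _ => by
    rw [derivative_rescale, hf, map_mul, mul_smul_comm]

theorem coeff_sum_smul_rescale {ι : Type*} (s : Finset ι) (c : ι → A) (f : A⟦X⟧) (n : ℕ) :
    coeff n (∑ i ∈ s, c i • rescale (c i) f) = (∑ i ∈ s, c i ^ (n + 1)) * coeff n f := by
  simp only [map_sum, coeff_smul, coeff_rescale, smul_eq_mul, sum_mul, pow_succ]
  exact sum_congr rfl fun i _ => by ring

theorem rescale_prod_range_rescale_pow {ω : A} {m : ℕ} (hω : ω ^ m = 1) (f : A⟦X⟧) :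
    rescale ω (∏ j ∈ range m, rescale (ω ^ j) f) = ∏ j ∈ range m, rescale (ω ^ j) f := by
  cases m with
  | zero => simp
  | succ n =>
    simp only [map_prod, rescale_rescale, ← pow_succ]
    rw [prod_range_succ, hω, ← pow_zero ω, prod_range_succ']

end CommSemiring

theorem coeff_eq_zero_of_rescale_eq_self [CommRing A] [NoZeroDivisors A] {a : A} {F : A⟦X⟧}
    (hF : rescale a F = F) {n : ℕ} (hn : a ^ n ≠ 1) : coeff n F = 0 := by
  have h : (a ^ n - 1) * coeff n F = 0 := by
    rw [sub_mul, one_mul, ← coeff_rescale, hF, sub_self]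
  exact (mul_eq_zero.mp h).resolve_left (sub_ne_zero.mpr hn)

end PowerSeries

theorem geom_sum_eq_zero_of_pow_eq_one {R : Type*} [Ring R] [NoZeroDivisors R] {x : R}
    (hx : x ≠ 1) {n : ℕ} (hn : x ^ n = 1) : ∑ i ∈ range n, x ^ i = 0 := by
  have h := geom_sum_mul x n
  rw [hn, sub_self] at h
  exact (mul_eq_zero.mp h).resolve_right (sub_ne_zero.mpr hx)

namespace IsPrimitiveRoot

variable {A : Type*} [CommRing A] [IsDomain A] {ω : A} {m : ℕ}

theorem geom_sum_pow (hω : IsPrimitiveRoot ω m) (k : ℕ) :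
    ∑ j ∈ range m, (ω ^ k) ^ j = if m ∣ k then (m : A) else 0 := by
  split_ifs with hk
  · simp [(hω.pow_eq_one_iff_dvd k).mpr hk]
  · refine geom_sum_eq_zero_of_pow_eq_one (mt (hω.pow_eq_one_iff_dvd k).mp hk) ?_
    rw [pow_right_comm, hω.pow_eq_one, one_pow]

theorem coeff_prod_range_rescale_pow_eq_zero (hω : IsPrimitiveRoot ω m) (f : A⟦X⟧) {k : ℕ}
    (hk : ¬ m ∣ k) : coeff k (∏ j ∈ range m, rescale (ω ^ j) f) = 0 :=
  coeff_eq_zero_of_rescale_eq_self (rescale_prod_range_rescale_pow hω.pow_eq_one f)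
    (mt (hω.pow_eq_one_iff_dvd k).mp hk)

theorem coeff_sum_range_smul_rescale_pow (hω : IsPrimitiveRoot ω m) (f : A⟦X⟧) {k : ℕ}
    (hk : 0 < k) :
    coeff (k - 1) (∑ j ∈ range m, ω ^ j • rescale (ω ^ j) f) =
      if m ∣ k then (m : A) * coeff (k - 1) f else 0 := by
  simp_rw [coeff_sum_smul_rescale, Nat.sub_add_cancel hk, pow_right_comm ω _ k,
    hω.geom_sum_pow, ite_mul, zero_mul]

end IsPrimitiveRoot

theorem symmetricTriple_rootsOfUnity_general (m : ℕ) (A : Type*) [CommRing A]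
    [IsDomain A] (ω : A) (hω : IsPrimitiveRoot ω m)
    (E H P : PowerSeries A) (hT : IsSymmetricTriple E H P) :
    IsSymmetricTriple
      (∏ j ∈ Finset.range m, PowerSeries.rescale (ω ^ j) E)
      (∏ j ∈ Finset.range m, PowerSeries.rescale (ω ^ j) H)
      (∑ j ∈ Finset.range m, ω ^ j • PowerSeries.rescale (ω ^ j) P) ∧
    (∀ k : ℕ, ¬ m ∣ k →
      PowerSeries.coeff k (∏ j ∈ Finset.range m, PowerSeries.rescale (ω ^ j) E) = 0 ∧
      PowerSeries.coeff k (∏ j ∈ Finset.range m, PowerSeries.rescale (ω ^ j) H) = 0 ∧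
      PowerSeries.coeff (k - 1)
        (∑ j ∈ Finset.range m, ω ^ j • PowerSeries.rescale (ω ^ j) P) = 0) ∧
    (∀ k : ℕ, 1 ≤ k → m ∣ k →
      PowerSeries.coeff (k - 1)
          (∑ j ∈ Finset.range m, ω ^ j • PowerSeries.rescale (ω ^ j) P) =
        (m : A) * PowerSeries.coeff (k - 1) P) := by
  obtain ⟨hE₀, hH₀, hE, hH⟩ := hT
  refine ⟨⟨?_, ?_, ?_, derivative_prod_rescale _ _ hH⟩, fun k hk => ⟨?_, ?_, ?_⟩,
    fun k hk₁ hk => ?_⟩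
  · simp [map_prod, constantCoeff_rescale, hE₀]
  · simp [map_prod, constantCoeff_rescale, hH₀]
  · rw [derivative_prod_rescale _ _ hE, map_sum]
    simp only [rescale_smul, rescale_rescale, mul_comm]
  · exact hω.coeff_prod_range_rescale_pow_eq_zero E hk
  · exact hω.coeff_prod_range_rescale_pow_eq_zero H hk
  · have hk₀ : 0 < k := Nat.pos_of_ne_zero fun h => hk (h ▸ dvd_zero m)
    rw [hω.coeff_sum_range_smul_rescale_pow P hk₀, if_neg hk]
  · rw [hω.coeff_sum_range_smul_rescale_pow P hk₁, if_pos hk]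

/-- **Averaging a symmetric triple over `m`-th roots of unity.**
With `Ẽ(t) = ∏_j E(ω^j t)`, `H̃(t) = ∏_j H(ω^j t)`, `P̃(t) = Σ_j ω^j P(ω^j t)` for a
primitive `m`-th root of unity `ω`, `(Ẽ, H̃, P̃)` is a symmetric triple, all coefficients
vanish away from indices divisible by `m`, and `p̃_k = m·p_k` for `m ∣ k`, `k ≥ 1`. -/
theorem symmetricTriple_rootsOfUnity (m : ℕ) (hm : 1 ≤ m) (A : Type*) [CommRing A]
    [IsDomain A] [Algebra ℚ A] (ω : A) (hω : IsPrimitiveRoot ω m)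
    (E H P : PowerSeries A) (hT : IsSymmetricTriple E H P) :
    IsSymmetricTriple
      (∏ j ∈ Finset.range m, PowerSeries.rescale (ω ^ j) E)
      (∏ j ∈ Finset.range m, PowerSeries.rescale (ω ^ j) H)
      (∑ j ∈ Finset.range m, ω ^ j • PowerSeries.rescale (ω ^ j) P) ∧
    (∀ k : ℕ, ¬ m ∣ k →
      PowerSeries.coeff k (∏ j ∈ Finset.range m, PowerSeries.rescale (ω ^ j) E) = 0 ∧
      PowerSeries.coeff k (∏ j ∈ Finset.range m, PowerSeries.rescale (ω ^ j) H) = 0 ∧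
      PowerSeries.coeff (k - 1)
        (∑ j ∈ Finset.range m, ω ^ j • PowerSeries.rescale (ω ^ j) P) = 0) ∧
    (∀ k : ℕ, 1 ≤ k → m ∣ k →
      PowerSeries.coeff (k - 1)
          (∑ j ∈ Finset.range m, ω ^ j • PowerSeries.rescale (ω ^ j) P) =
        (m : A) * PowerSeries.coeff (k - 1) P) :=
  symmetricTriple_rootsOfUnity_general m A ω hω E H P hT
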